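/- arXiv:1403.6559 — 7 statements merged into one kernel-verified Lean document; each statement's English description precedes it below -/
import Mathlib

section
/- Let (σ, σ_p) have dominating point spectrum with witness R > 0. Then there is no sequence (λ_n)_{n∈ℕ} of eigenvalues λ_n ∈ σ_p such that the moduli |λ_n| are strictly increasing (|λ_n| < |λ_{n+1}| for all n) and lim_{n→∞} |λ_n| = r for some real r > R. -/
/-- The peripheral spectrum of a set `S ⊆ ℂ`: the points of `S` whose modulus equals
the supremum of the moduli of elements of `S`. -/
def peripheralSpectrum (S : Set ℂ) : Set ℂ :=
  {z | z ∈ S ∧ ‖z‖ = ⨆ w : S, ‖(w : ℂ)‖}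

/-- `(σ, σp)` has dominating point spectrum with witness `R > 0`:
`σ \ D_R` is nonempty and for every `r > R`, (i) if `σ ∩ D_r ∩ σp ≠ ∅` then the
peripheral spectrum of `σ ∩ D_r` is nonempty, and (ii) `σ \ D_r ⊆ σp`. -/
def HasDominatingPointSpectrum (σ σp : Set ℂ) (R : ℝ) : Prop :=
  0 < R ∧ (σ \ Metric.ball 0 R).Nonempty ∧
    ∀ r : ℝ, R < r →
      ((σ ∩ Metric.ball 0 r ∩ σp).Nonempty →
        (peripheralSpectrum (σ ∩ Metric.ball 0 r)).Nonempty) ∧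
      σ \ Metric.ball 0 r ⊆ σp

/-!
The eigenvalues `λ n` lie in `σ ∩ D_r` and their moduli approach `r`, so the supremum of the
moduli over `σ ∩ D_r` is `r`, which no point of the open disc attains: the peripheral spectrum
of `σ ∩ D_r` is empty, contradicting condition (i) of dominating point spectrum.
-/

open Filter Topology

lemma StrictMono.lt_of_tendsto_atTop {α : Type*} [LinearOrder α] [TopologicalSpace α]
    [OrderClosedTopology α] {u : ℕ → α} {a : α} (hu : StrictMono u)
    (ha : Tendsto u atTop (𝓝 a)) (n : ℕ) : u n < a :=
  (hu (Nat.lt_succ_self n)).trans_le (hu.monotone.ge_of_tendsto ha (n + 1))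

lemma peripheralSpectrum_eq_empty_of_tendsto {S : Set ℂ} {r : ℝ}
    (hS : S ⊆ Metric.ball 0 r) {u : ℕ → ℂ} (hu : ∀ n, u n ∈ S)
    (hlim : Tendsto (fun n => ‖u n‖) atTop (𝓝 r)) : peripheralSpectrum S = ∅ := by
  refine Set.eq_empty_of_forall_notMem fun z ⟨hzS, hz⟩ => ?_
  have hbdd : BddAbove (Set.range fun w : S => ‖(w : ℂ)‖) := by
    refine ⟨r, ?_⟩
    rintro _ ⟨w, rfl⟩
    exact (mem_ball_zero_iff.mp (hS w.2)).le
  have hsup : r ≤ ⨆ w : S, ‖(w : ℂ)‖ :=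
    le_of_tendsto' hlim fun n => le_ciSup hbdd ⟨u n, hu n⟩
  exact (mem_ball_zero_iff.mp (hS hzS)).not_ge (hz ▸ hsup)

theorem stmt1_general (σ σp : Set ℂ)
    (hsub : σp ⊆ σ) (R : ℝ) (hdom : HasDominatingPointSpectrum σ σp R) :
    ¬ ∃ (l : ℕ → ℂ) (r : ℝ), R < r ∧ (∀ n, l n ∈ σp) ∧
      (∀ n, ‖l n‖ < ‖l (n + 1)‖) ∧
      Filter.Tendsto (fun n => ‖l n‖) Filter.atTop (nhds r) := by
  rintro ⟨l, r, hr, hmem, hmono, hlim⟩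
  have hlt : ∀ n, ‖l n‖ < r := (strictMono_nat_of_lt_succ hmono).lt_of_tendsto_atTop hlim
  have hin : ∀ n, l n ∈ σ ∩ Metric.ball 0 r := fun n =>
    ⟨hsub (hmem n), mem_ball_zero_iff.mpr (hlt n)⟩
  obtain ⟨z, hz⟩ := (hdom.2.2 r hr).1 ⟨l 0, hin 0, hmem 0⟩
  rw [peripheralSpectrum_eq_empty_of_tendsto Set.inter_subset_right hin hlim] at hz
  exact hz

theorem stmt1 (σ σp : Set ℂ) (hbdd : Bornology.IsBounded σ) (hne : σ.Nonempty)
    (hsub : σp ⊆ σ) (R : ℝ) (hdom : HasDominatingPointSpectrum σ σp R) :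
    ¬ ∃ (l : ℕ → ℂ) (r : ℝ), R < r ∧ (∀ n, l n ∈ σp) ∧
      (∀ n, ‖l n‖ < ‖l (n + 1)‖) ∧
      Filter.Tendsto (fun n => ‖l n‖) Filter.atTop (nhds r) :=
  stmt1_general σ σp hsub R hdom
end

section
/- (Yosida's mean ergodic theorem, first part.) Let F be a Hausdorff locally convex topological vector space over ℂ, let U : F → F be a continuous linear operator such that the family of iterates {U^n : n ∈ ℕ} is equicontinuous, and let ψ ∈ F. Suppose there exist ψ₀ ∈ F and a strictly increasing sequence (n_i) of natural numbers such that for every continuous linear functional φ : F → ℂ one has φ(A_{n_i}(U)ψ) → φ(ψ₀) as i → ∞ (weak convergence of a subsequence of averages). Then U ψ₀ = ψ₀ and A_n(U)ψ → ψ₀ in the topology of F as n → ∞. -/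
/-!
Write `A n` for the Cesàro averages of the powers of `U`. Equicontinuity of the powers makes
every orbit bounded, so `A n (U x) - A n x = n⁻¹ • (U ^ n x - x)` tends to `0`; testing this
against continuous functionals along the subsequence `ni` gives `U ψ₀ = ψ₀`.
Each `A n ψ - ψ` lies in the range of `U - 1`, and by Hahn–Banach weak limits of vectors of a
subspace stay in its closure, so `ψ₀ - ψ ∈ closure (range (U - 1))`. On `range (U - 1)` the
averages tend to `0` by the same telescoping, and this passes to the closure because the `A n`,
being convex combinations of the `U ^ k`, are equicontinuous in a locally convex space.
Hence `A n ψ = A n ψ₀ - A n (ψ₀ - ψ) → ψ₀`.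
-/

open Filter Topology Function Bornology

section Separation

variable {𝕜 E : Type*} [RCLike 𝕜] [AddCommGroup E] [Module 𝕜 E] [TopologicalSpace E]
  [IsTopologicalAddGroup E] [ContinuousSMul 𝕜 E] [Module ℝ E] [IsScalarTower ℝ 𝕜 E]
  [LocallyConvexSpace ℝ E]

theorem RCLike.separatingDual [T1Space E] : SeparatingDual 𝕜 E :=
  ⟨fun x hx ↦ by
    obtain ⟨f, hf⟩ := RCLike.geometric_hahn_banach_point_point (𝕜 := 𝕜) hx
    exact ⟨f, fun h ↦ by simp [h] at hf⟩⟩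

theorem Submodule.exists_strongDual_ne_zero_of_notMem_closure (p : Submodule 𝕜 E) {x : E}
    (hx : x ∉ closure (p : Set E)) :
    ∃ f : StrongDual 𝕜 E, f x ≠ 0 ∧ ∀ a ∈ p, f a = 0 := by
  obtain ⟨f, u, hlt, hu⟩ := RCLike.geometric_hahn_banach_closed_point (𝕜 := 𝕜)
    (p.topologicalClosure.restrictScalars ℝ).convex p.isClosed_topologicalClosure hx
  have hu0 : 0 < u := by simpa using hlt 0 p.topologicalClosure.zero_mem
  refine ⟨f, fun h ↦ by simp [h] at hu; linarith, fun a ha ↦ by_contra fun hfa ↦ ?_⟩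
  -- `re ∘ f` is bounded above by `u` on `p`, but `f` takes the value `u` at a multiple of `a`.
  have := hlt (((u : 𝕜) * (f a)⁻¹) • a) (p.le_topologicalClosure (p.smul_mem _ ha))
  simp [hfa] at this

theorem Submodule.mem_closure_of_tendsto_strongDual (p : Submodule 𝕜 E) {ι : Type*}
    {l : Filter ι} [l.NeBot] {u : ι → E} {y : E} (hu : ∀ᶠ i in l, u i ∈ p)
    (hy : ∀ f : StrongDual 𝕜 E, Tendsto (fun i ↦ f (u i)) l (𝓝 (f y))) :
    y ∈ closure (p : Set E) := by
  by_contra hy'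
  obtain ⟨f, hfy, hfp⟩ := p.exists_strongDual_ne_zero_of_notMem_closure hy'
  exact hfy <| tendsto_nhds_unique (hy f) <|
    tendsto_const_nhds.congr' <| hu.mono fun i hi ↦ (hfp _ hi).symm

end Separation

theorem SeparatingDual.eq_of_tendsto_of_tendsto_strongDual {R V ι : Type*} [Ring R]
    [TopologicalSpace R] [T2Space R] [AddCommGroup V] [TopologicalSpace V] [Module R V]
    [SeparatingDual R V] {l : Filter ι} [l.NeBot] {u : ι → V} {a b : V}
    (ha : Tendsto u l (𝓝 a))
    (hb : ∀ f : StrongDual R V, Tendsto (fun i ↦ f (u i)) l (𝓝 (f b))) : a = b :=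
  SeparatingDual.eq_iff_forall_dual_eq.2 fun f ↦
    tendsto_nhds_unique ((f.continuous.tendsto a).comp ha) (hb f)

theorem equicontinuousAt_iff_eventually_sub_mem {ι X G : Type*} [TopologicalSpace X]
    [UniformSpace G] [AddGroup G] [IsUniformAddGroup G] {F : ι → X → G} {x₀ : X} :
    EquicontinuousAt F x₀ ↔ ∀ V ∈ 𝓝 (0 : G), ∀ᶠ x in 𝓝 x₀, ∀ i, F i x - F i x₀ ∈ V :=
  (𝓝 (0 : G)).basis_sets.uniformity_of_nhds_zero.equicontinuousAt_iff_right

theorem EquicontinuousAt.isVonNBounded_range_apply {ι 𝕜 E G hom : Type*} [NormedField 𝕜]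
    [AddCommGroup E] [Module 𝕜 E] [TopologicalSpace E] [ContinuousSMul 𝕜 E]
    [AddCommGroup G] [Module 𝕜 G] [UniformSpace G] [IsUniformAddGroup G]
    [FunLike hom E G] [LinearMapClass hom 𝕜 E G] {T : ι → hom}
    (hT : EquicontinuousAt (fun i ↦ ⇑(T i)) 0) (x : E) :
    IsVonNBounded 𝕜 (Set.range fun i ↦ T i x) := by
  intro V hV
  have hW := equicontinuousAt_iff_eventually_sub_mem.1 hT V hV
  filter_upwards [(absorbent_nhds_zero (𝕜 := 𝕜) hW).absorbs (x := x)] with c hc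
  rintro _ ⟨i, rfl⟩
  obtain ⟨y, hy, hyx⟩ := hc rfl
  simpa [← hyx] using Set.smul_mem_smul_set (a := c) (hy i)

theorem tendsto_birkhoffAverage_apply_sub_birkhoffAverage_of_isVonNBounded {𝕜 α E : Type*}
    [RCLike 𝕜] [AddCommGroup E] [Module 𝕜 E] [TopologicalSpace E] [IsTopologicalAddGroup E]
    [ContinuousSMul 𝕜 E] {f : α → α} {g : α → E} {x : α}
    (h : IsVonNBounded 𝕜 (Set.range (g <| f^[·] x))) :
    Tendsto (fun n ↦ birkhoffAverage 𝕜 f g n (f x) - birkhoffAverage 𝕜 f g n x)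
      atTop (𝓝 0) := by
  have hinv : Tendsto (fun n : ℕ ↦ (n : 𝕜)⁻¹) atTop (𝓝 0) := tendsto_inv_atTop_nhds_zero_nat
  simp_rw [birkhoffAverage_apply_sub_birkhoffAverage, smul_sub]
  simpa using (h.smul_tendsto_zero (.of_forall Set.mem_range_self) hinv).sub
    (hinv.smul_const (g x))

theorem Convex.birkhoffAverage_mem {R α E : Type*} [Field R] [LinearOrder R]
    [IsStrictOrderedRing R] [AddCommGroup E] [Module R E] {s : Set E} (hs : Convex R s)
    (h0 : (0 : E) ∈ s) {f : α → α} {g : α → E} {x : α} (h : ∀ k, g (f^[k] x) ∈ s)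
    (n : ℕ) :
    birkhoffAverage R f g n x ∈ s := by
  rcases Nat.eq_zero_or_pos n with rfl | hn
  · simpa using h0
  rw [birkhoffAverage, birkhoffSum, Finset.smul_sum]
  refine hs.sum_mem (fun _ _ ↦ by positivity) ?_ fun k _ ↦ h k
  simp [hn.ne']

section LinearDynamics

variable {R E : Type*} [DivisionRing R] [AddCommGroup E] [Module R E]

theorem birkhoffAverage_id_map_sub {hom : Type*} [FunLike hom E E] [AddMonoidHomClass hom E E]
    (f : hom) (n : ℕ) (x y : E) :
    birkhoffAverage R f id n (x - y) = birkhoffAverage R f id n x - birkhoffAverage R f id n y := by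
  simp [birkhoffAverage, birkhoffSum, iterate_map_sub, Finset.sum_sub_distrib, smul_sub]

theorem map_birkhoffAverage_id {hom : Type*} [FunLike hom E E] [AddMonoidHomClass hom E E]
    (f : hom) (n : ℕ) (x : E) :
    f (birkhoffAverage R f id n x) = birkhoffAverage R f id n (f x) := by
  rw [map_birkhoffAverage R R]
  simp [birkhoffAverage, birkhoffSum, ← iterate_succ_apply' f, iterate_succ_apply]

theorem birkhoffAverage_id_sub_self_mem_range (U : Module.End R E) {n : ℕ} (hn : (n : R) ≠ 0)
    (x : E) : birkhoffAverage R U id n x - x ∈ LinearMap.range (U - 1) := by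
  have hsum : birkhoffAverage R U id n x - x =
      (n : R)⁻¹ • ∑ k ∈ Finset.range n, (U^[k] x - x) := by
    rw [Finset.sum_sub_distrib, Finset.sum_const, Finset.card_range, smul_sub,
      ← Nat.cast_smul_eq_nsmul R, inv_smul_smul₀ hn]
    rfl
  rw [hsum]
  refine Submodule.smul_mem _ _ <| Submodule.sum_mem _ fun k _ ↦
    ⟨∑ j ∈ Finset.range k, (U ^ j) x, ?_⟩
  simpa [Module.End.pow_apply] using congr($(mul_geom_sum U k) x)

end LinearDynamics

theorem ContinuousLinearMap.birkhoffAverage_id_apply {𝕜 E : Type*} [DivisionRing 𝕜]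
    [AddCommGroup E] [TopologicalSpace E] [Module 𝕜 E] (U : E →L[𝕜] E) (n : ℕ) (x : E) :
    birkhoffAverage 𝕜 U id n x = (n : 𝕜)⁻¹ • ∑ k ∈ Finset.range n, (U ^ k) x := by
  simp [birkhoffAverage, birkhoffSum]

theorem equicontinuous_birkhoffAverage_of_equicontinuous_pow {𝕜 E : Type*} [DivisionRing 𝕜]
    [AddCommGroup E] [Module 𝕜 E] [UniformSpace E] [IsUniformAddGroup E] [Module ℝ E]
    [LocallyConvexSpace ℝ E] {U : E →L[𝕜] E}
    (hU : Equicontinuous fun n ↦ ⇑(U ^ n)) : Equicontinuous (birkhoffAverage 𝕜 U id) := by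
  intro x₀
  rw [(LocallyConvexSpace.convex_basis_zero ℝ E).uniformity_of_nhds_zero
    |>.equicontinuousAt_iff_right]
  rintro V ⟨hV, hVconv⟩
  filter_upwards [equicontinuousAt_iff_eventually_sub_mem.1 (hU x₀) V hV] with x hx n
  rw [id_eq, ← birkhoffAverage_id_map_sub, birkhoffAverage_congr_ring 𝕜 ℝ]
  exact hVconv.birkhoffAverage_mem (mem_of_mem_nhds hV)
    (fun k ↦ by simpa [iterate_map_sub] using hx k) n

section EquicontinuousPowers

variable {𝕜 E : Type*} [RCLike 𝕜] [AddCommGroup E] [Module 𝕜 E] [UniformSpace E]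
  [IsUniformAddGroup E] [ContinuousSMul 𝕜 E] {U : E →L[𝕜] E}

theorem tendsto_birkhoffAverage_apply_sub_birkhoffAverage_of_equicontinuous_pow
    (hU : Equicontinuous fun n ↦ ⇑(U ^ n)) (x : E) :
    Tendsto (fun n ↦ birkhoffAverage 𝕜 U id n (U x) - birkhoffAverage 𝕜 U id n x)
      atTop (𝓝 0) :=
  tendsto_birkhoffAverage_apply_sub_birkhoffAverage_of_isVonNBounded <| by
    simpa using (hU 0).isVonNBounded_range_apply (𝕜 := 𝕜) x

variable [Module ℝ E] [LocallyConvexSpace ℝ E]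

theorem tendsto_birkhoffAverage_of_mem_closure_range (hU : Equicontinuous fun n ↦ ⇑(U ^ n))
    {x : E} (hx : x ∈ closure (LinearMap.range ((U : E →ₗ[𝕜] E) - 1) : Set E)) :
    Tendsto (birkhoffAverage 𝕜 U id · x) atTop (𝓝 0) := by
  refine closure_minimal ?_ ((equicontinuous_birkhoffAverage_of_equicontinuous_pow hU
    ).isClosed_setOfPred_tendsto continuous_const) hx
  rintro _ ⟨w, rfl⟩
  simpa [birkhoffAverage_id_map_sub] using
    tendsto_birkhoffAverage_apply_sub_birkhoffAverage_of_equicontinuous_pow hU w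

end EquicontinuousPowers

/-- Yosida's mean ergodic theorem, first part, on a Hausdorff locally convex
topological vector space over `ℂ`.  Here `A_n(U)ψ = n⁻¹ ∑_{k=0}^{n-1} U^k ψ`. -/
theorem stmt3 (F : Type*) [AddCommGroup F] [Module ℂ F] [UniformSpace F]
    [IsUniformAddGroup F] [ContinuousSMul ℂ F] [T2Space F]
    [Module ℝ F] [IsScalarTower ℝ ℂ F] [LocallyConvexSpace ℝ F]
    (U : F →L[ℂ] F)
    (hequi : Equicontinuous fun n : ℕ => ⇑(U ^ n))
    (ψ ψ₀ : F) (ni : ℕ → ℕ) (hni : StrictMono ni)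
    (hweak : ∀ φ : F →L[ℂ] ℂ,
      Tendsto (fun i : ℕ => φ (((ni i : ℂ))⁻¹ • ∑ k ∈ Finset.range (ni i), (U ^ k) ψ))
        atTop (nhds (φ ψ₀))) :
    U ψ₀ = ψ₀ ∧
      Tendsto (fun n : ℕ => ((n : ℂ))⁻¹ • ∑ k ∈ Finset.range n, (U ^ k) ψ)
        atTop (nhds ψ₀) := by
  have := RCLike.separatingDual (𝕜 := ℂ) (E := F)
  simp only [← ContinuousLinearMap.birkhoffAverage_id_apply] at hweak ⊢
  set A := birkhoffAverage ℂ U id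
  have hfix : IsFixedPt U ψ₀ := by
    have hsub : Tendsto (fun i ↦ A (ni i) (U ψ) - A (ni i) ψ) atTop (𝓝 0) :=
      (tendsto_birkhoffAverage_apply_sub_birkhoffAverage_of_equicontinuous_pow hequi ψ).comp
        hni.tendsto_atTop
    refine sub_eq_zero.1
      (SeparatingDual.eq_of_tendsto_of_tendsto_strongDual (R := ℂ) hsub fun φ ↦ ?_).symm
    simpa [A, ← map_birkhoffAverage_id] using (hweak (φ.comp U)).sub (hweak φ)
  have hmem : ψ₀ - ψ ∈ closure (LinearMap.range ((U : F →ₗ[ℂ] F) - 1) : Set F) := by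
    refine Submodule.mem_closure_of_tendsto_strongDual _ (l := atTop)
      (u := fun i ↦ A (ni i) ψ - ψ) ?_ fun φ ↦ by simpa using (hweak φ).sub_const (φ ψ)
    filter_upwards [hni.tendsto_atTop.eventually_ne_atTop 0] with i hi
    exact birkhoffAverage_id_sub_self_mem_range (U : F →ₗ[ℂ] F) (Nat.cast_ne_zero.2 hi) ψ
  refine ⟨hfix, ?_⟩
  simpa [A, birkhoffAverage_id_map_sub] using (hfix.tendsto_birkhoffAverage ℂ id).sub
    (tendsto_birkhoffAverage_of_mem_closure_range hequi hmem)
end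

section
/- (Mean ergodic projection onto a peripheral eigenspace in a separable reflexive Banach space.) Let F be a separable complex Banach space that is reflexive, i.e. the canonical inclusion of F into its double dual is surjective. Let U : F → F be a continuous linear operator and λ ∈ ℂ, λ ≠ 0, such that sup_{n ∈ ℕ} ‖(λ⁻¹ • U)^n‖ < ∞. Then there exists a continuous linear operator P : F → F such that: (a) for every ψ ∈ F, A_n(λ⁻¹U)ψ := n⁻¹ ∑_{k=0}^{n-1} λ^{-k} U^k ψ converges in norm to P ψ as n → ∞; (b) P ∘ P = P; (c) P ∘ U = U ∘ P; (d) the range of P equals the eigenspace ker(λ·I − U); (e) the kernel of P equals the norm-closure of the range of (λ·I − U); in particular F = ker(λ·I − U) ⊕ closure(range(λ·I − U)). -/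
/-!
Put `T = λ⁻¹ U` and `Aₙ = n⁻¹ ∑_{k<n} Tᵏ`. Power-boundedness gives `‖Aₙ‖ ≤ C` and
`(1 - T) Aₙ = n⁻¹ (1 - Tⁿ) → 0` in norm, so `Aₙ → 0` strongly on `range (1 - T)` and, by
equicontinuity, on its closure, while `Aₙ` fixes every fixed point of `T`.
By reflexivity and Banach–Alaoglu in the bidual, the bounded sequence `Aₙ x` has a weak cluster
point `y`. It is fixed by `T` since `(1 - T) Aₙ x → 0`, and `x - y` lies in the closure of
`range (1 - T)` by Hahn–Banach, since `x - Aₙ x ∈ range (1 - T)`. Hence `Aₙ x → y`, and the limit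
is the projection onto `ker (1 - T)` along `closure (range (1 - T))`.
-/

open Filter Topology Finset

section Duality

variable {𝕜 E : Type*} [RCLike 𝕜] [NormedAddCommGroup E] [NormedSpace 𝕜 E]

theorem Submodule.mem_topologicalClosure_of_forall_dual (p : Submodule 𝕜 E) {x : E}
    (h : ∀ g : StrongDual 𝕜 E, (∀ s ∈ p, g s = 0) → g x = 0) : x ∈ p.topologicalClosure := by
  set q := p.topologicalClosure
  -- makes `E ⧸ q` a normed space, whose dual separates points
  have : IsClosed (q : Set E) := p.isClosed_topologicalClosure
  by_contra hx
  have hne : q.mkQL x ≠ 0 := by simpa [Submodule.Quotient.mk_eq_zero] using hx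
  obtain ⟨f, hf⟩ := SeparatingDual.exists_ne_zero (R := 𝕜) hne
  refine hf (h (f.comp q.mkQL) fun s hs => ?_)
  have : q.mkQL s = 0 := (Submodule.Quotient.mk_eq_zero q).2 (p.le_topologicalClosure hs)
  simp only [ContinuousLinearMap.comp_apply, this, map_zero]

theorem NormedSpace.exists_forall_mapClusterPt_dual
    (hrefl : Function.Surjective (NormedSpace.inclusionInDoubleDual 𝕜 E))
    {ι : Type*} {l : Filter ι} [l.NeBot] {x : ι → E} {R : ℝ} (hx : ∀ i, ‖x i‖ ≤ R) :
    ∃ y : E, ∀ g : StrongDual 𝕜 E, MapClusterPt (g y) l (fun i => g (x i)) := by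
  set s : ι → WeakDual 𝕜 (StrongDual 𝕜 E) :=
    fun i => StrongDual.toWeakDual (NormedSpace.inclusionInDoubleDual 𝕜 E (x i))
  have hs : ∀ᶠ i in l, s i ∈ WeakDual.toStrongDual ⁻¹' Metric.closedBall 0 R :=
    Eventually.of_forall fun i => by
      rw [Set.mem_preimage, Metric.mem_closedBall]
      refine (dist_zero_right (WeakDual.toStrongDual (s i))).trans_le ?_
      exact (NormedSpace.double_dual_bound 𝕜 E (x i)).trans (hx i)
  obtain ⟨Φ, -, hΦ⟩ :=
    (WeakDual.isCompact_closedBall 0 R).exists_clusterPt (le_principal_iff.2 (mem_map.2 hs))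
  obtain ⟨y, hy⟩ := hrefl (WeakDual.toStrongDual Φ)
  refine ⟨y, fun g => ?_⟩
  have hΦg : Φ g = g y := by rw [← NormedSpace.dual_def 𝕜 E y g, hy]; rfl
  rw [← hΦg]
  exact hΦ.map (WeakDual.eval_continuous g).continuousAt tendsto_map

end Duality

theorem MapClusterPt.eq_of_tendsto {X α : Type*} [TopologicalSpace X] [T2Space X] {x y : X}
    {F : Filter α} {u : α → X} (h : MapClusterPt x F u) (hu : Tendsto u F (𝓝 y)) : x = y :=
  eq_of_nhds_neBot (ClusterPt.mono h hu)

namespace ContinuousLinearMap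

variable {𝕜 E : Type*} [RCLike 𝕜] [NormedAddCommGroup E] [NormedSpace 𝕜 E]

noncomputable def powAverage (T : E →L[𝕜] E) (n : ℕ) : E →L[𝕜] E :=
  (n : 𝕜)⁻¹ • ∑ k ∈ range n, T ^ k

variable {T : E →L[𝕜] E} {C : ℝ}

theorem powAverage_apply (n : ℕ) (x : E) :
    T.powAverage n x = (n : 𝕜)⁻¹ • ∑ k ∈ range n, (T ^ k) x := by
  simp [powAverage]

theorem norm_powAverage_le (hC : ∀ n, ‖T ^ n‖ ≤ C) (n : ℕ) : ‖T.powAverage n‖ ≤ C := by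
  rcases eq_or_ne n 0 with rfl | hn
  · simp only [powAverage, Nat.cast_zero, inv_zero, zero_smul, norm_zero]
    exact (norm_nonneg _).trans (hC 0)
  calc ‖T.powAverage n‖ ≤ ‖(n : 𝕜)⁻¹‖ * ∑ k ∈ range n, ‖T ^ k‖ := by
        rw [powAverage]; refine (opNorm_smul_le _ _).trans ?_; gcongr; exact norm_sum_le _ _
    _ ≤ (n : ℝ)⁻¹ * ∑ _k ∈ range n, C := by
        rw [norm_inv, RCLike.norm_natCast]; gcongr with k; exact hC k
    _ = C := by simp [hn]

theorem _root_.Commute.powAverage_right {S : E →L[𝕜] E} (h : Commute S T) (n : ℕ) :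
    Commute S (T.powAverage n) :=
  ((Commute.sum_right _ _ _ fun k _ => h.pow_right k)).smul_right _

theorem one_sub_mul_powAverage (n : ℕ) :
    (1 - T) * T.powAverage n = (n : 𝕜)⁻¹ • (1 - T ^ n) := by
  rw [powAverage, mul_smul_comm, mul_neg_geom_sum]

theorem tendsto_one_sub_mul_powAverage (hC : ∀ n, ‖T ^ n‖ ≤ C) :
    Tendsto (fun n => (1 - T) * T.powAverage n) atTop (𝓝 0) := by
  simp_rw [one_sub_mul_powAverage]
  refine squeeze_zero_norm (a := fun n : ℕ => (n : ℝ)⁻¹ * (2 * C)) (fun n => ?_) ?_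
  · rw [norm_smul, norm_inv, RCLike.norm_natCast]
    gcongr
    calc ‖1 - T ^ n‖ ≤ ‖T ^ 0‖ + ‖T ^ n‖ := by rw [pow_zero]; exact norm_sub_le _ _
      _ ≤ 2 * C := by linarith [hC 0, hC n]
  · simpa using tendsto_inv_atTop_nhds_zero_nat.mul_const (2 * C)

theorem tendsto_one_sub_apply_powAverage (hC : ∀ n, ‖T ^ n‖ ≤ C) (x : E) :
    Tendsto (fun n => (1 - T) (T.powAverage n x)) atTop (𝓝 0) :=
  ((continuous_eval_const x).tendsto 0).comp (tendsto_one_sub_mul_powAverage hC)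

theorem exists_one_sub_mul_eq_one_sub_powAverage {n : ℕ} (hn : n ≠ 0) :
    ∃ B : E →L[𝕜] E, (1 - T) * B = 1 - T.powAverage n := by
  refine ⟨(n : 𝕜)⁻¹ • ∑ k ∈ range n, ∑ j ∈ range k, T ^ j, ?_⟩
  rw [mul_smul_comm, mul_sum]
  simp_rw [mul_neg_geom_sum, sum_sub_distrib, sum_const, card_range, smul_sub, powAverage]
  rw [← Nat.cast_smul_eq_nsmul 𝕜, smul_smul, inv_mul_cancel₀ (Nat.cast_ne_zero.2 hn), one_smul]

theorem powAverage_apply_of_isFixedPt {x : E} (hx : T x = x) {n : ℕ} (hn : n ≠ 0) :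
    T.powAverage n x = x := by
  have hpow (k : ℕ) : (T ^ k) x = x := by
    rw [FunLike.coe_pow_eq_iterate]; exact Function.iterate_fixed hx k
  rw [powAverage_apply, sum_congr rfl fun k _ => hpow k, sum_const, card_range,
    ← Nat.cast_smul_eq_nsmul 𝕜, smul_smul, inv_mul_cancel₀ (Nat.cast_ne_zero.2 hn), one_smul]

theorem tendsto_powAverage_apply_of_mem_closure (hC : ∀ n, ‖T ^ n‖ ≤ C) {z : E}
    (hz : z ∈ closure (Set.range ⇑(1 - T))) :
    Tendsto (fun n => T.powAverage n z) atTop (𝓝 0) := by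
  have hequi : Equicontinuous fun n => ⇑(T.powAverage n) :=
    ((NormedSpace.equicontinuous_TFAE T.powAverage).out 5 1).1
      (⟨C, norm_powAverage_le hC⟩ : ∃ C, ∀ n, ‖T.powAverage n‖ ≤ C)
  refine closure_minimal (Set.range_subset_iff.2 fun x => ?_)
    (hequi.isClosed_setOfPred_tendsto (l := atTop) continuous_const) hz
  have hcomm n : T.powAverage n ((1 - T) x) = (1 - T) (T.powAverage n x) :=
    congrArg (· x) (((Commute.one_left T).sub_left (Commute.refl T)).powAverage_right n).eq.symm
  simpa only [Set.mem_ofPred_eq, hcomm, zero_apply] using tendsto_one_sub_apply_powAverage hC x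

theorem exists_isFixedPt_sub_mem_closure
    (hrefl : Function.Surjective (NormedSpace.inclusionInDoubleDual 𝕜 E))
    (hC : ∀ n, ‖T ^ n‖ ≤ C) (x : E) :
    ∃ y, T y = y ∧ x - y ∈ closure (Set.range ⇑(1 - T)) := by
  obtain ⟨y, hy⟩ := NormedSpace.exists_forall_mapClusterPt_dual hrefl (l := atTop)
    (x := fun n => T.powAverage n x) fun n =>
      (le_opNorm _ x).trans (mul_le_mul_of_nonneg_right (norm_powAverage_le hC n) (norm_nonneg x))
  refine ⟨y, ?_, ?_⟩
  · have hvanish (g : StrongDual 𝕜 E) : g ((1 - T) y) = 0 :=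
      (hy (g.comp (1 - T))).eq_of_tendsto <| by
        rw [← map_zero g]
        exact (g.continuous.tendsto 0).comp (tendsto_one_sub_apply_powAverage hC x)
    have := SeparatingDual.eq_zero_of_forall_dual_eq_zero hvanish
    rwa [sub_apply, one_apply_eq_self, sub_eq_zero, eq_comm] at this
  · change x - y ∈ (LinearMap.range ((1 - T : E →L[𝕜] E) : E →ₗ[𝕜] E)).topologicalClosure
    refine Submodule.mem_topologicalClosure_of_forall_dual _ fun g hg => ?_
    have hgx : Tendsto (fun n => g (T.powAverage n x)) atTop (𝓝 (g x)) :=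
      tendsto_const_nhds.congr' <| (eventually_ne_atTop 0).mono fun n hn => by
        obtain ⟨B, hB⟩ := exists_one_sub_mul_eq_one_sub_powAverage (T := T) hn
        have := hg _ ⟨B x, congrArg (· x) hB⟩
        rwa [sub_apply, one_apply_eq_self, map_sub, sub_eq_zero] at this
    rw [map_sub, (hy g).eq_of_tendsto hgx, sub_self]

theorem exists_tendsto_powAverage [CompleteSpace E]
    (hrefl : Function.Surjective (NormedSpace.inclusionInDoubleDual 𝕜 E))
    (hC : ∀ n, ‖T ^ n‖ ≤ C) :
    ∃ P : E →L[𝕜] E, ∀ x, Tendsto (fun n => T.powAverage n x) atTop (𝓝 (P x)) := by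
  have hlim (x : E) : ∃ y, Tendsto (fun n => T.powAverage n x) atTop (𝓝 y) := by
    obtain ⟨y, hy, hxy⟩ := exists_isFixedPt_sub_mem_closure hrefl hC x
    refine ⟨y, ?_⟩
    have := (tendsto_powAverage_apply_of_mem_closure hC hxy).const_add y
    rw [add_zero] at this
    refine this.congr' ((eventually_ne_atTop 0).mono fun n hn => ?_)
    rw [map_sub, powAverage_apply_of_isFixedPt hy hn, add_sub_cancel]
  choose f hf using hlim
  exact ⟨continuousLinearMapOfTendsto _ (tendsto_pi_nhds.2 hf), hf⟩

section Limit

variable {P : E →L[𝕜] E} (hP : ∀ x, Tendsto (fun n => T.powAverage n x) atTop (𝓝 (P x)))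
include hP

theorem apply_apply_eq_of_tendsto_powAverage (hC : ∀ n, ‖T ^ n‖ ≤ C) (x : E) :
    T (P x) = P x := by
  have := tendsto_nhds_unique (((1 - T).continuous.tendsto _).comp (hP x))
    (tendsto_one_sub_apply_powAverage hC x)
  rwa [sub_apply, one_apply_eq_self, sub_eq_zero, eq_comm] at this

theorem apply_eq_self_of_tendsto_powAverage {x : E} (hx : T x = x) : P x = x :=
  tendsto_nhds_unique (hP x) <| tendsto_const_nhds.congr' <|
    (eventually_ne_atTop 0).mono fun _ hn => (powAverage_apply_of_isFixedPt hx hn).symm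

theorem mul_self_eq_of_tendsto_powAverage (hC : ∀ n, ‖T ^ n‖ ≤ C) : P * P = P :=
  ext fun x =>
    apply_eq_self_of_tendsto_powAverage hP (apply_apply_eq_of_tendsto_powAverage hP hC x)

theorem commute_of_tendsto_powAverage {S : E →L[𝕜] E} (h : Commute S T) : Commute S P :=
  ext fun x => tendsto_nhds_unique ((S.continuous.tendsto _).comp (hP x)) <|
    (hP (S x)).congr fun n => congrArg (· x) (h.powAverage_right n).eq.symm

theorem range_eq_of_tendsto_powAverage (hC : ∀ n, ‖T ^ n‖ ≤ C) :
    Set.range P = {x | T x = x} :=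
  Set.Subset.antisymm (Set.range_subset_iff.2 (apply_apply_eq_of_tendsto_powAverage hP hC))
    fun _ hx => ⟨_, apply_eq_self_of_tendsto_powAverage hP hx⟩

theorem setOf_apply_eq_zero_of_tendsto_powAverage (hC : ∀ n, ‖T ^ n‖ ≤ C) :
    {x | P x = 0} = closure (Set.range ⇑(1 - T)) := by
  refine Set.Subset.antisymm (fun x hx => ?_) fun x hx =>
    tendsto_nhds_unique (hP x) (tendsto_powAverage_apply_of_mem_closure hC hx)
  have hlim : Tendsto (fun n => x - T.powAverage n x) atTop (𝓝 x) := by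
    simpa [show P x = 0 from hx] using tendsto_const_nhds.sub (hP x)
  refine mem_closure_of_tendsto hlim ((eventually_ne_atTop 0).mono fun n hn => ?_)
  obtain ⟨B, hB⟩ := exists_one_sub_mul_eq_one_sub_powAverage (T := T) hn
  exact ⟨B x, by simpa using congrArg (· x) hB⟩

end Limit

end ContinuousLinearMap

theorem stmt5_general (F : Type*) [NormedAddCommGroup F] [NormedSpace ℂ F] [CompleteSpace F]
    (hrefl : Function.Surjective ⇑(NormedSpace.inclusionInDoubleDual ℂ F))
    (U : F →L[ℂ] F) (lam : ℂ) (hlam : lam ≠ 0)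
    (hbdd : ∃ C : ℝ, ∀ n : ℕ, ‖(lam⁻¹ • U) ^ n‖ ≤ C) :
    ∃ P : F →L[ℂ] F,
      (∀ ψ : F,
        Tendsto (fun n : ℕ => ((n : ℂ))⁻¹ • ∑ k ∈ Finset.range n, lam⁻¹ ^ k • (U ^ k) ψ)
          atTop (nhds (P ψ))) ∧
      P.comp P = P ∧
      P.comp U = U.comp P ∧
      Set.range ⇑P = {ψ : F | U ψ = lam • ψ} ∧
      {ψ : F | P ψ = 0} = closure (Set.range ⇑(lam • ContinuousLinearMap.id ℂ F - U)) := by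
  set T := lam⁻¹ • U
  obtain ⟨C, hC⟩ := hbdd
  obtain ⟨P, hP⟩ := T.exists_tendsto_powAverage hrefl hC
  have hfix : {ψ : F | U ψ = lam • ψ} = {ψ | T ψ = ψ} := by
    ext ψ
    simp [T, inv_smul_eq_iff₀ hlam, eq_comm]
  have hrange : Set.range ⇑(lam • ContinuousLinearMap.id ℂ F - U) = Set.range ⇑(1 - T) := by
    have hscale : lam • ContinuousLinearMap.id ℂ F - U = lam • (1 - T) := by
      ext ψ
      simp [T, smul_sub, smul_smul, mul_inv_cancel₀ hlam]
    rw [hscale]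
    exact congrArg ((↑) : Submodule ℂ F → Set F)
      (LinearMap.range_smul ((1 - T : F →L[ℂ] F) : F →ₗ[ℂ] F) lam hlam)
  refine ⟨P, fun ψ => ?_, ContinuousLinearMap.mul_self_eq_of_tendsto_powAverage hP hC,
    (ContinuousLinearMap.commute_of_tendsto_powAverage hP ((Commute.refl U).smul_right _)).eq.symm,
    hfix ▸ ContinuousLinearMap.range_eq_of_tendsto_powAverage hP hC,
    hrange ▸ ContinuousLinearMap.setOf_apply_eq_zero_of_tendsto_powAverage hP hC⟩
  simpa only [ContinuousLinearMap.powAverage_apply, T, smul_pow, smul_apply] using hP ψ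

/-- Mean ergodic projection onto a peripheral eigenspace in a separable reflexive
complex Banach space.  `A_n(λ⁻¹U)ψ = n⁻¹ ∑_{k=0}^{n-1} λ^{-k} U^k ψ` converges in norm
to a continuous projection `P` commuting with `U`, whose range is `ker(λI − U)` and whose
kernel is the closure of the range of `λI − U`. -/
theorem stmt5 (F : Type*) [NormedAddCommGroup F] [NormedSpace ℂ F] [CompleteSpace F]
    [TopologicalSpace.SeparableSpace F]
    (hrefl : Function.Surjective ⇑(NormedSpace.inclusionInDoubleDual ℂ F))
    (U : F →L[ℂ] F) (lam : ℂ) (hlam : lam ≠ 0)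
    (hbdd : ∃ C : ℝ, ∀ n : ℕ, ‖(lam⁻¹ • U) ^ n‖ ≤ C) :
    ∃ P : F →L[ℂ] F,
      (∀ ψ : F,
        Tendsto (fun n : ℕ => ((n : ℂ))⁻¹ • ∑ k ∈ Finset.range n, lam⁻¹ ^ k • (U ^ k) ψ)
          atTop (nhds (P ψ))) ∧
      P.comp P = P ∧
      P.comp U = U.comp P ∧
      Set.range ⇑P = {ψ : F | U ψ = lam • ψ} ∧
      {ψ : F | P ψ = 0} = closure (Set.range ⇑(lam • ContinuousLinearMap.id ℂ F - U)) :=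
  stmt5_general F hrefl U lam hlam hbdd
end

section
/- Let F be a complex vector space, U : F → F a linear map, J a finite index set, μ : J → ℂ, and P_j : F → F (j ∈ J) linear maps satisfying: P_j ∘ P_j = P_j for all j; P_i ∘ P_j = 0 for i ≠ j; U ∘ P_j = P_j ∘ U for all j; and U(P_j x) = μ_j • (P_j x) for all x ∈ F and all j (the range of P_j lies in the eigenspace of U at μ_j). Let λ ∈ ℂ with λ ≠ 0 and suppose ψ ∈ F satisfies U(ψ − ∑_{j ∈ J} P_j ψ) = λ • ψ. Then P_j ψ = 0 for every j ∈ J, and consequently U ψ = λ • ψ. -/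
/-! Applying `P j` to the hypothesis kills the left-hand side: `P j` commutes with `U` and
annihilates `ψ - ∑ i, P i ψ` by orthogonality and idempotence. Hence `λ • P j ψ = 0`, so
`P j ψ = 0` since `λ ≠ 0`, and the hypothesis reduces to `U ψ = λ • ψ`. -/

theorem LinearMap.apply_sub_sum_apply_eq_zero {R M ι : Type*} [Ring R] [AddCommGroup M]
    [Module R M] [Fintype ι] {P : ι → M →ₗ[R] M} (hidem : ∀ j, (P j).comp (P j) = P j)
    (horth : ∀ i j, i ≠ j → (P i).comp (P j) = 0) (j : ι) (x : M) :
    P j (x - ∑ i, P i x) = 0 := by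
  have hsum : ∑ i, P j (P i x) = P j x := by
    rw [Finset.sum_eq_single j]
    · exact LinearMap.congr_fun (hidem j) x
    · exact fun i _ hij => LinearMap.congr_fun (horth j i hij.symm) x
    · exact fun hj => absurd (Finset.mem_univ j) hj
  rw [map_sub, map_sum, hsum, sub_self]

theorem stmt6_general (F : Type*) [AddCommGroup F] [Module ℂ F]
    (J : Type*) [Fintype J] (U : F →ₗ[ℂ] F) (P : J → (F →ₗ[ℂ] F))
    (hidem : ∀ j, (P j).comp (P j) = P j)
    (horth : ∀ i j, i ≠ j → (P i).comp (P j) = 0)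
    (hcomm : ∀ j, U.comp (P j) = (P j).comp U)
    (lam : ℂ) (hlam : lam ≠ 0) (ψ : F)
    (hψ : U (ψ - ∑ j, P j ψ) = lam • ψ) :
    (∀ j, P j ψ = 0) ∧ U ψ = lam • ψ := by
  have hP : ∀ j, P j ψ = 0 := fun j => by
    have hsmul : lam • P j ψ = 0 := by
      rw [← map_smul, ← hψ, ← LinearMap.comp_apply, ← hcomm j, LinearMap.comp_apply,
        LinearMap.apply_sub_sum_apply_eq_zero hidem horth, map_zero]
    exact (smul_eq_zero.mp hsmul).resolve_left hlam
  refine ⟨hP, ?_⟩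
  simpa [hP] using hψ

/-- Cancellation step of the Generalized Laplace Analysis theorem: a vector `ψ` with
`U(ψ − ∑_j P_j ψ) = λ • ψ` (λ ≠ 0), where the `P_j` are mutually orthogonal
idempotents commuting with `U` whose ranges lie in the eigenspaces of `U` at `μ_j`,
is annihilated by each `P_j` and is a genuine eigenvector of `U` at `λ`. -/
theorem stmt6 (F : Type*) [AddCommGroup F] [Module ℂ F]
    (J : Type*) [Fintype J] (U : F →ₗ[ℂ] F) (μ : J → ℂ) (P : J → (F →ₗ[ℂ] F))
    (hidem : ∀ j, (P j).comp (P j) = P j)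
    (horth : ∀ i j, i ≠ j → (P i).comp (P j) = 0)
    (hcomm : ∀ j, U.comp (P j) = (P j).comp U)
    (heig : ∀ j x, U (P j x) = μ j • P j x)
    (lam : ℂ) (hlam : lam ≠ 0) (ψ : F)
    (hψ : U (ψ - ∑ j, P j ψ) = lam • ψ) :
    (∀ j, P j ψ = 0) ∧ U ψ = lam • ψ :=
  stmt6_general F J U P hidem horth hcomm lam hlam ψ hψ
end

section
/- For every m ∈ ℕ and n ∈ ℤ, the complex-valued function b_{m,n}(x,s) = x^m · exp(−m ∫₀^s (ρ(u) − ρ*) du) · exp(i n s) on ℝ² is an eigenfunction of the Koopman semigroup of the flow Φ: for all t ∈ ℝ and all (x,s) ∈ ℝ², b_{m,n}(Φ_t(x,s)) = exp((m ρ* + i n) t) · b_{m,n}(x,s). -/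
open MeasureTheory Real

/-- The average `ρ* = (2π)⁻¹ ∫₀^{2π} ρ(u) du`. -/
noncomputable def rhoStar (ρ : ℝ → ℝ) : ℝ := (2 * π)⁻¹ * ∫ u in (0:ℝ)..(2 * π), ρ u

/-- The flow `Φ_t(x,s) = (x · exp(∫_s^{s+t} ρ(u) du), s + t)` of the linearized
limit-cycle system `ẋ = ρ(s)x`, `ṡ = 1`. -/
noncomputable def flowMap (ρ : ℝ → ℝ) (t : ℝ) (p : ℝ × ℝ) : ℝ × ℝ :=
  (p.1 * Real.exp (∫ u in p.2..(p.2 + t), ρ u), p.2 + t)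

/-- The complex observable `b_{m,n}(x,s) = x^m exp(−m ∫₀^s (ρ(u) − ρ*) du) exp(i n s)`. -/
noncomputable def bObs (ρ : ℝ → ℝ) (m : ℕ) (n : ℤ) (p : ℝ × ℝ) : ℂ :=
  (p.1 : ℂ) ^ m * Complex.exp (-(m : ℂ) * ((∫ u in (0:ℝ)..p.2, (ρ u - rhoStar ρ)) : ℝ)) *
    Complex.exp (Complex.I * (n : ℂ) * (p.2 : ℂ))

theorem intervalIntegral.integral_sub_const_zero_add {f : ℝ → ℝ} (hf : Continuous f)
    (c s t : ℝ) :
    ∫ u in (0:ℝ)..(s + t), (f u - c) =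
      (∫ u in (0:ℝ)..s, (f u - c)) + ((∫ u in s..(s + t), f u) - c * t) := by
  have hfc : Continuous fun u => f u - c := hf.sub continuous_const
  rw [← integral_add_adjacent_intervals (hfc.intervalIntegrable 0 s)
      (hfc.intervalIntegrable s (s + t))]
  congr 1
  rw [integral_sub (hf.intervalIntegrable _ _) intervalIntegrable_const, integral_const,
    smul_eq_mul, add_sub_cancel_left, mul_comm]

theorem stmt13_general (ρ : ℝ → ℝ) (hc : Continuous ρ)
    (m : ℕ) (n : ℤ) :
    ∀ (t : ℝ) (x s : ℝ),
      bObs ρ m n (flowMap ρ t (x, s)) =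
        Complex.exp (((m : ℂ) * (rhoStar ρ : ℂ) + Complex.I * (n : ℂ)) * (t : ℂ)) *
          bObs ρ m n (x, s) := by
  intro t x s
  -- Along the flow `x ^ m` gains the factor `exp (m ∫_s^{s+t} ρ)`, which the weight cancels
  -- up to `exp (m ρ* t)`.
  simp only [bObs, flowMap, intervalIntegral.integral_sub_const_zero_add hc]
  push_cast
  rw [mul_pow, ← Complex.exp_nat_mul]
  simp only [mul_assoc, ← Complex.exp_add]
  rw [mul_left_comm (Complex.exp _), ← Complex.exp_add]
  congr 2
  ring

/-- Each `b_{m,n}` is an eigenfunction of the Koopman semigroup of the flow `Φ`: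
`b_{m,n} ∘ Φ_t = exp((m ρ* + i n) t) · b_{m,n}`. -/
theorem stmt13 (ρ : ℝ → ℝ) (hc : Continuous ρ)
    (hper : ∀ s, ρ (s + 2 * π) = ρ s) (m : ℕ) (n : ℤ) :
    ∀ (t : ℝ) (x s : ℝ),
      bObs ρ m n (flowMap ρ t (x, s)) =
        Complex.exp (((m : ℂ) * (rhoStar ρ : ℂ) + Complex.I * (n : ℂ)) * (t : ℂ)) *
          bObs ρ m n (x, s) :=
  stmt13_general ρ hc m n
end

section
/- For every K ∈ ℕ, the subspace V_K := span_ℂ { (x,s) ↦ x^k · exp(−k ξ(s)) · exp(i n s) : k ∈ ℕ, k ≤ K, n ∈ ℤ } of the functions ℝ² → ℂ is invariant under the Koopman semigroup of the flow Φ: for every t ∈ ℝ, if f ∈ V_K then f ∘ Φ_t ∈ V_K. -/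
open MeasureTheory Real

/-- `ξ(s) = ∫₀^s (ρ(u) − ρ*) du`. -/
noncomputable def xiFun (ρ : ℝ → ℝ) (s : ℝ) : ℝ := ∫ u in (0:ℝ)..s, (ρ u - rhoStar ρ)

/-!
Each generator `ψ_{k,n}(x,s) = x^k exp(−k ξ(s)) exp(i n s)` of `V_K` is an eigenfunction of the
Koopman operator: since `∫_s^{s+t} ρ = ξ(s+t) − ξ(s) + ρ* t`, the factor `x^k` picks up
`exp(k ξ(s+t) − k ξ(s) + k ρ* t)` along the flow, the `ξ`-terms cancel against the second
factor, and `ψ_{k,n} ∘ Φ_t = exp(k ρ* t + i n t) ψ_{k,n}`. A linear map sending each generator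
of a span to a multiple of itself preserves the span.
-/

theorem Submodule.comp_mem_span_of_forall_comp_eq_smul {R M X : Type*} [Semiring R]
    [AddCommMonoid M] [Module R M] {S : Set (X → M)} {Φ : X → X}
    (hS : ∀ g ∈ S, ∃ c : R, g ∘ Φ = c • g) {f : X → M} (hf : f ∈ span R S) :
    f ∘ Φ ∈ span R S := by
  suffices span R S ≤ (span R S).comap (LinearMap.funLeft R M Φ) from this hf
  refine span_le.2 fun g hg => ?_
  obtain ⟨c, hc⟩ := hS g hg
  change g ∘ Φ ∈ span R S
  exact hc ▸ smul_mem _ c (subset_span hg)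

namespace Koopman

variable {ρ : ℝ → ℝ}

theorem integral_eq_xiFun_sub_add (hρ : ∀ a b, IntervalIntegrable ρ volume a b) (s t : ℝ) :
    ∫ u in s..(s + t), ρ u = xiFun ρ (s + t) - xiFun ρ s + rhoStar ρ * t := by
  have hsub : ∀ a b, IntervalIntegrable (fun u => ρ u - rhoStar ρ) volume a b :=
    fun a b => (hρ a b).sub intervalIntegrable_const
  rw [xiFun, xiFun, intervalIntegral.integral_interval_sub_left (hsub _ _) (hsub _ _),
    intervalIntegral.integral_sub (hρ _ _) intervalIntegrable_const,
    intervalIntegral.integral_const, smul_eq_mul]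
  ring

noncomputable def mode (ρ : ℝ → ℝ) (k : ℕ) (n : ℤ) (p : ℝ × ℝ) : ℂ :=
  (p.1 : ℂ) ^ k * Complex.exp (-(k : ℂ) * (xiFun ρ p.2 : ℂ)) *
    Complex.exp (Complex.I * (n : ℂ) * (p.2 : ℂ))

theorem mode_comp_flowMap (hρ : ∀ a b, IntervalIntegrable ρ volume a b) (k : ℕ) (n : ℤ)
    (t : ℝ) :
    mode ρ k n ∘ flowMap ρ t =
      Complex.exp (k * (rhoStar ρ * t) + Complex.I * n * t) • mode ρ k n := by
  funext ⟨x, s⟩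
  simp only [Function.comp_apply, flowMap, mode, Pi.smul_apply, smul_eq_mul,
    integral_eq_xiFun_sub_add hρ]
  push_cast
  rw [mul_pow, ← Complex.exp_nat_mul]
  simp only [mul_assoc, mul_left_comm (Complex.exp _) ((x : ℂ) ^ k), ← Complex.exp_add]
  congr 2
  ring

end Koopman

theorem stmt16_general (ρ : ℝ → ℝ) (hc : Continuous ρ) (K : ℕ) :
    ∀ t : ℝ, ∀ f ∈ Submodule.span ℂ
        {f : ℝ × ℝ → ℂ | ∃ k : ℕ, k ≤ K ∧ ∃ n : ℤ, f = fun p =>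
          (p.1 : ℂ) ^ k * Complex.exp (-(k : ℂ) * (xiFun ρ p.2 : ℂ)) *
            Complex.exp (Complex.I * (n : ℂ) * (p.2 : ℂ))},
      (fun p => f (flowMap ρ t p)) ∈ Submodule.span ℂ
        {f : ℝ × ℝ → ℂ | ∃ k : ℕ, k ≤ K ∧ ∃ n : ℤ, f = fun p =>
          (p.1 : ℂ) ^ k * Complex.exp (-(k : ℂ) * (xiFun ρ p.2 : ℂ)) *
            Complex.exp (Complex.I * (n : ℂ) * (p.2 : ℂ))} := by
  intro t f hf
  refine Submodule.comp_mem_span_of_forall_comp_eq_smul (fun g hg => ?_) hf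
  obtain ⟨k, -, n, rfl⟩ := hg
  exact ⟨_, Koopman.mode_comp_flowMap hc.intervalIntegrable k n t⟩

/-- For every `K`, the span `V_K` of the functions
`(x,s) ↦ x^k exp(−k ξ(s)) exp(i n s)` with `k ≤ K`, `n ∈ ℤ`, is invariant under the
Koopman semigroup `f ↦ f ∘ Φ_t` of the flow `Φ`. -/
theorem stmt16 (ρ : ℝ → ℝ) (hc : Continuous ρ)
    (hper : ∀ s, ρ (s + 2 * π) = ρ s) (K : ℕ) :
    ∀ t : ℝ, ∀ f ∈ Submodule.span ℂ
        {f : ℝ × ℝ → ℂ | ∃ k : ℕ, k ≤ K ∧ ∃ n : ℤ, f = fun p =>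
          (p.1 : ℂ) ^ k * Complex.exp (-(k : ℂ) * (xiFun ρ p.2 : ℂ)) *
            Complex.exp (Complex.I * (n : ℂ) * (p.2 : ℂ))},
      (fun p => f (flowMap ρ t p)) ∈ Submodule.span ℂ
        {f : ℝ × ℝ → ℂ | ∃ k : ℕ, k ≤ K ∧ ∃ n : ℤ, f = fun p =>
          (p.1 : ℂ) ^ k * Complex.exp (-(k : ℂ) * (xiFun ρ p.2 : ℂ)) *
            Complex.exp (Complex.I * (n : ℂ) * (p.2 : ℂ))} :=
  stmt16_general ρ hc K
end

section
/- (Generalized Laplace Analysis for the Koopman operator of a stable diagonalizable linear system, in the sequence-space model.) Let d ≥ 1 and λ : Fin d → ℂ with 0 < |λ_i| < 1 for all i. Let H := ℓ²(ℕ^d; ℂ) = lp (fun _ : (Fin d → ℕ) => ℂ) 2 and define M : H → H by (M a)(k) = (∏_i λ_i^{k_i}) · a(k). Then M is a well-defined continuous linear operator of norm at most 1. Fix a multi-index m : Fin d → ℕ and set μ := ∏_i λ_i^{m_i}. For a ∈ H let b ∈ H be given by b(k) = 0 if ∏_i |λ_i|^{k_i} > |μ| and b(k) = a(k) otherwise,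 and let P a ∈ H be given by (P a)(k) = a(k) if ∏_i λ_i^{k_i} = μ and (P a)(k) = 0 otherwise. Then for every a ∈ H the Laplace averages n⁻¹ ∑_{j=1}^{n} μ^{-j} (M^j b) converge in the norm of H to P a as n → ∞. -/
/-!
Everything is diagonal in the standard basis: `M` multiplies the `k`-th coordinate by
`w k = ∏ i, λ_i ^ k_i`, so the `k`-th coordinate of the Laplace average is the Cesàro mean
`n⁻¹ ∑_{j=1}^n z ^ j` of the powers of `z = μ⁻¹ w k`, times `b k`. On the coordinates kept in `b`
we have `‖z‖ ≤ 1`; there the geometric sums stay bounded unless `z = 1`, so the mean tends to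
`1` if `w k = μ` and to `0` otherwise, and is bounded by `1`. Dominated convergence in `ℓ²`,
with dominating sequence `‖a k‖`, turns this coordinatewise convergence into norm convergence.
-/

open Filter
open scoped ENNReal Topology lp

namespace lp

variable {α : Type*} {E : α → Type*} [∀ i, NormedAddCommGroup (E i)] {p : ℝ≥0∞}

theorem tendsto_of_dominated_convergence [Fact (1 ≤ p)] (hp : p ≠ ∞) {ι : Type*}
    {l : Filter ι} {F : ι → lp E p} {f : lp E p} {g : α → ℝ} (hg : Memℓp g p)
    (h_bound : ∀ᶠ n in l, ∀ i, ‖F n i‖ ≤ g i) (h_lim : ∀ i, Tendsto (F · i) l (𝓝 (f i))) :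
    Tendsto F l (𝓝 f) := by
  rcases l.eq_or_neBot with rfl | _
  · exact tendsto_bot
  have hp0 : 0 < p.toReal :=
    ENNReal.toReal_pos (zero_lt_one.trans_le (Fact.out : 1 ≤ p)).ne' hp
  have hf_le (i : α) : ‖f i‖ ≤ g i :=
    le_of_tendsto (h_lim i).norm (h_bound.mono fun n h => h i)
  have h_rpow : Tendsto (fun n => ‖F n - f‖ ^ p.toReal) l (𝓝 0) := by
    simp_rw [norm_rpow_eq_tsum hp0, coeFn_sub, Pi.sub_apply]
    have := tendsto_tsum_of_dominated_convergence (𝓕 := l)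
      (f := fun n i => ‖F n i - f i‖ ^ p.toReal) (g := fun _ => 0)
      (((hg.const_mul 2).summable hp0)) (fun i => ?_) ?_
    · simpa using this
    · have := ((tendsto_sub_nhds_zero_iff.2 (h_lim i)).norm).rpow_const (p := p.toReal)
        (Or.inr hp0.le)
      simpa [Real.zero_rpow hp0.ne'] using this
    · filter_upwards [h_bound] with n hn i
      rw [Real.norm_of_nonneg (by positivity)]
      gcongr
      calc ‖F n i - f i‖ ≤ ‖F n i‖ + ‖f i‖ := norm_sub_le _ _
        _ ≤ g i + g i := add_le_add (hn i) (hf_le i)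
        _ = 2 * g i := (two_mul _).symm
        _ ≤ ‖2 * g i‖ := Real.le_norm_self _
  have := h_rpow.rpow_const (p := p.toReal⁻¹) (Or.inr (inv_nonneg.2 hp0.le))
  rw [Real.zero_rpow (inv_ne_zero hp0.ne')] at this
  refine tendsto_iff_norm_sub_tendsto_zero.2 (this.congr fun n => ?_)
  exact Real.rpow_rpow_inv (norm_nonneg _) hp0.ne'

variable {𝕜 : Type*} [NontriviallyNormedField 𝕜] [∀ i, NormedSpace 𝕜 (E i)]

theorem norm_smul_apply_le (w : ℓ^∞(α, 𝕜)) (a : ∀ i, E i) (i : α) :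
    ‖w i • a i‖ ≤ ‖w‖ * ‖a i‖ :=
  (norm_smul_le _ _).trans <|
    mul_le_mul_of_nonneg_right (norm_apply_le_norm ENNReal.top_ne_zero w i) (norm_nonneg _)

variable [Fact (1 ≤ p)]

noncomputable def mulCLM (w : ℓ^∞(α, 𝕜)) : lp E p →L[𝕜] lp E p :=
  LinearMap.mkContinuous
    { toFun := fun a => ⟨fun i => w i • a i,
        ((lp.memℓp a).norm.const_mul ‖w‖).mono (norm_smul_apply_le w a)⟩
      map_add' := fun a b => ext <| funext fun i => smul_add (w i) (a i) (b i)
      map_smul' := fun c a => ext <| funext fun i => smul_comm (w i) c (a i) }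
    ‖w‖ fun a => by
      have hp : p ≠ 0 := (zero_lt_one.trans_le Fact.out).ne'
      calc ‖(⟨_, _⟩ : lp E p)‖ ≤ ‖‖w‖ • toNorm a‖ :=
            norm_mono hp fun i => (norm_smul_apply_le w a i).trans (by simp)
        _ = ‖w‖ * ‖a‖ := by
          rw [norm_const_smul hp, norm_toNorm, Real.norm_of_nonneg (norm_nonneg w)]

@[simp] theorem mulCLM_apply (w : ℓ^∞(α, 𝕜)) (a : lp E p) (i : α) :
    mulCLM w a i = w i • a i := rfl

theorem norm_mulCLM_le (w : ℓ^∞(α, 𝕜)) : ‖(mulCLM w : lp E p →L[𝕜] lp E p)‖ ≤ ‖w‖ :=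
  LinearMap.mkContinuous_norm_le _ (norm_nonneg _) _

theorem mulCLM_pow_apply (w : ℓ^∞(α, 𝕜)) (j : ℕ) (a : lp E p) (i : α) :
    ((mulCLM w ^ j) a) i = w i ^ j • a i := by
  induction j generalizing a with
  | zero => simp
  | succ j ih => rw [pow_succ, mul_apply_eq_comp, ih, mulCLM_apply, pow_succ, mul_smul]

end lp

section CesaroPow

variable {𝕜 : Type*} [RCLike 𝕜]

def cesaroPow (z : 𝕜) (n : ℕ) : 𝕜 := (n : 𝕜)⁻¹ * ∑ j ∈ Finset.Icc 1 n, z ^ j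

theorem norm_cesaroPow_le_one {z : 𝕜} (hz : ‖z‖ ≤ 1) (n : ℕ) : ‖cesaroPow z n‖ ≤ 1 := by
  rcases Nat.eq_zero_or_pos n with rfl | hn
  · simp [cesaroPow]
  have hsum : ‖∑ j ∈ Finset.Icc 1 n, z ^ j‖ ≤ n := calc
    _ ≤ ∑ j ∈ Finset.Icc 1 n, ‖z‖ ^ j := norm_sum_le_of_le _ fun j _ => (norm_pow z j).le
    _ ≤ ∑ _j ∈ Finset.Icc 1 n, (1 : ℝ) :=
      Finset.sum_le_sum fun j _ => pow_le_one₀ (norm_nonneg z) hz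
    _ = n := by simp
  rw [cesaroPow, norm_mul, norm_inv, RCLike.norm_natCast]
  exact inv_mul_le_one_of_le₀ hsum (Nat.cast_nonneg n)

theorem cesaroPow_one {n : ℕ} (hn : n ≠ 0) : cesaroPow (1 : 𝕜) n = 1 := by
  simp [cesaroPow, hn]

theorem tendsto_cesaroPow_of_ne_one {z : 𝕜} (hz : ‖z‖ ≤ 1) (hz1 : z ≠ 1) :
    Tendsto (cesaroPow z) atTop (𝓝 0) := by
  -- the partial sums `(z^(n+1) - z)/(z - 1)` of the geometric series stay bounded
  have hbound (n : ℕ) : ‖∑ j ∈ Finset.Icc 1 n, z ^ j‖ ≤ 2 / ‖z - 1‖ := by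
    rw [← Finset.Ico_add_one_right_eq_Icc, geom_sum_Ico hz1 (by omega), norm_div, pow_one]
    gcongr
    calc ‖z ^ (n + 1) - z‖ ≤ ‖z‖ ^ (n + 1) + ‖z‖ := (norm_sub_le _ _).trans_eq (by rw [norm_pow])
      _ ≤ 1 + 1 := add_le_add (pow_le_one₀ (norm_nonneg z) hz) hz
      _ = 2 := one_add_one_eq_two
  refine squeeze_zero_norm (fun n => ?_)
    (by simpa using (tendsto_inv_atTop_nhds_zero_nat (𝕜 := ℝ)).mul_const (2 / ‖z - 1‖))
  rw [cesaroPow, norm_mul, norm_inv, RCLike.norm_natCast]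
  exact mul_le_mul_of_nonneg_left (hbound n) (by positivity)

theorem tendsto_cesaroPow {z : 𝕜} (hz : ‖z‖ ≤ 1) :
    Tendsto (cesaroPow z) atTop (𝓝 (if z = 1 then 1 else 0)) := by
  split_ifs with hz1
  · subst hz1
    exact tendsto_const_nhds.congr'
      ((eventually_ne_atTop 0).mono fun n hn => (cesaroPow_one hn).symm)
  · exact tendsto_cesaroPow_of_ne_one hz hz1

end CesaroPow

theorem norm_inv_mul_le_one_of_norm_le {𝕜 : Type*} [NormedDivisionRing 𝕜] {μ w : 𝕜}
    (h : ‖w‖ ≤ ‖μ‖) : ‖μ⁻¹ * w‖ ≤ 1 := by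
  rw [norm_mul, norm_inv]
  exact inv_mul_le_one_of_le₀ h (norm_nonneg μ)

section LaplaceAverage

variable {𝕜 : Type*} [RCLike 𝕜] {E : Type*} [NormedAddCommGroup E] [NormedSpace 𝕜 E]

theorem lp.mulCLM_laplaceAverage_apply {α : Type*} {F : α → Type*}
    [∀ i, NormedAddCommGroup (F i)] [∀ i, NormedSpace 𝕜 (F i)] {p : ℝ≥0∞} [Fact (1 ≤ p)]
    (w : ℓ^∞(α, 𝕜)) (c : 𝕜) (n : ℕ) (a : lp F p) (i : α) :
    ((n : 𝕜)⁻¹ • ∑ j ∈ Finset.Icc 1 n, c ^ j • (mulCLM w ^ j) a) i =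
      cesaroPow (c * w i) n • a i := by
  simp only [lp.coeFn_smul, lp.coeFn_sum, Pi.smul_apply, Finset.sum_apply, mulCLM_pow_apply,
    cesaroPow, smul_smul, ← Finset.sum_smul, Finset.mul_sum, mul_pow]

theorem norm_cesaroPow_smul_ite_le {μ w : 𝕜} (x : E) (n : ℕ) :
    ‖cesaroPow (μ⁻¹ * w) n • if ‖μ‖ < ‖w‖ then 0 else x‖ ≤ ‖x‖ := by
  split_ifs with hw
  · simp
  · rw [norm_smul]
    exact mul_le_of_le_one_left (norm_nonneg x)
      (norm_cesaroPow_le_one (norm_inv_mul_le_one_of_norm_le (not_lt.1 hw)) n)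

theorem tendsto_cesaroPow_smul_ite {μ w : 𝕜} (hμ : μ ≠ 0) (x : E) :
    Tendsto (fun n => cesaroPow (μ⁻¹ * w) n • if ‖μ‖ < ‖w‖ then 0 else x) atTop
      (𝓝 (if w = μ then x else 0)) := by
  by_cases hw : ‖μ‖ < ‖w‖
  · rw [if_neg (show w ≠ μ by rintro rfl; exact hw.false)]
    simp [hw]
  · have hz : ‖μ⁻¹ * w‖ ≤ 1 := norm_inv_mul_le_one_of_norm_le (not_lt.1 hw)
    have hz1 : μ⁻¹ * w = 1 ↔ w = μ := by rw [inv_mul_eq_one₀ hμ, eq_comm]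
    simpa [hw, hz1, ite_smul] using (tendsto_cesaroPow hz).smul_const x

end LaplaceAverage

theorem stmt17_general (d : ℕ) (lam : Fin d → ℂ)
    (hlam : ∀ i, 0 < ‖lam i‖ ∧ ‖lam i‖ < 1)
    (m : Fin d → ℕ) :
    ∃ M : lp (fun _ : (Fin d → ℕ) => ℂ) 2 →L[ℂ] lp (fun _ : (Fin d → ℕ) => ℂ) 2,
      (∀ (a : lp (fun _ : (Fin d → ℕ) => ℂ) 2) (k : Fin d → ℕ),
        M a k = (∏ i, lam i ^ k i) * a k) ∧
      ‖M‖ ≤ 1 ∧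
      ∀ a : lp (fun _ : (Fin d → ℕ) => ℂ) 2,
        ∃ b Pa : lp (fun _ : (Fin d → ℕ) => ℂ) 2,
          (∀ k : Fin d → ℕ,
            (‖∏ i, lam i ^ m i‖ < ∏ i, ‖lam i‖ ^ k i → b k = 0) ∧
            (¬ ‖∏ i, lam i ^ m i‖ < ∏ i, ‖lam i‖ ^ k i →
              b k = a k)) ∧
          (∀ k : Fin d → ℕ,
            ((∏ i, lam i ^ k i) = ∏ i, lam i ^ m i → Pa k = a k) ∧
            ((∏ i, lam i ^ k i) ≠ ∏ i, lam i ^ m i → Pa k = 0)) ∧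
          Tendsto
            (fun n : ℕ => ((n : ℂ))⁻¹ •
              ∑ j ∈ Finset.Icc 1 n, ((∏ i, lam i ^ m i)⁻¹) ^ j • (M ^ j) b)
            atTop (nhds Pa) := by
  set w : (Fin d → ℕ) → ℂ := fun k => ∏ i, lam i ^ k i
  have hw_norm (k : Fin d → ℕ) : ‖w k‖ = ∏ i, ‖lam i‖ ^ k i := by simp [w]
  have hw_le (k : Fin d → ℕ) : ‖w k‖ ≤ 1 := (hw_norm k).trans_le <| Finset.prod_le_one
    (fun _ _ => by positivity) fun i _ => pow_le_one₀ (norm_nonneg _) (hlam i).2.le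
  let W : ℓ^∞(Fin d → ℕ, ℂ) := ⟨w, memℓp_infty ⟨1, Set.forall_mem_range.2 hw_le⟩⟩
  refine ⟨lp.mulCLM W, fun a k => rfl,
    (lp.norm_mulCLM_le W).trans (lp.norm_le_of_forall_le zero_le_one hw_le), fun a => ?_⟩
  set μ := ∏ i, lam i ^ m i
  have hμ : μ ≠ 0 := Finset.prod_ne_zero_iff.2 fun i _ => pow_ne_zero _ (norm_pos_iff.1 (hlam i).1)
  let b : lp (fun _ : (Fin d → ℕ) => ℂ) 2 := ⟨fun k => if ‖μ‖ < ‖w k‖ then 0 else a k,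
    (lp.memℓp a).mono' fun k => by split_ifs <;> simp⟩
  let Pa : lp (fun _ : (Fin d → ℕ) => ℂ) 2 := ⟨fun k => if w k = μ then a k else 0,
    (lp.memℓp a).mono' fun k => by split_ifs <;> simp⟩
  refine ⟨b, Pa, fun k => ?_, fun k => ⟨fun h => if_pos h, fun h => if_neg h⟩, ?_⟩
  · rw [← hw_norm]
    exact ⟨fun h => if_pos h, fun h => if_neg h⟩
  refine lp.tendsto_of_dominated_convergence ENNReal.ofNat_ne_top (lp.memℓp a).norm
    (Eventually.of_forall fun n k => ?_) fun k => ?_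
  · rw [lp.mulCLM_laplaceAverage_apply]
    exact norm_cesaroPow_smul_ite_le (a k) n
  · simp_rw [lp.mulCLM_laplaceAverage_apply]
    exact tendsto_cesaroPow_smul_ite hμ (a k)

/-- Generalized Laplace Analysis for the Koopman operator of a stable diagonalizable
linear system, in the sequence-space model `H = ℓ²(ℕ^d; ℂ)`.  The multiplication
operator `M` by `k ↦ ∏_i λ_i^{k_i}` is a well-defined continuous linear operator of norm
at most `1`, and for every `a ∈ H` the Laplace averages `n⁻¹ ∑_{j=1}^n μ^{-j} M^j b`
(where `μ = ∏_i λ_i^{m_i}` and `b` is `a` with the coordinates of modulus `> |μ|` removed)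
converge in norm to the spectral projection `P a` of `a` onto the eigenspace at `μ`. -/
theorem stmt17 (d : ℕ) (hd : 1 ≤ d) (lam : Fin d → ℂ)
    (hlam : ∀ i, 0 < ‖lam i‖ ∧ ‖lam i‖ < 1)
    (m : Fin d → ℕ) :
    ∃ M : lp (fun _ : (Fin d → ℕ) => ℂ) 2 →L[ℂ] lp (fun _ : (Fin d → ℕ) => ℂ) 2,
      (∀ (a : lp (fun _ : (Fin d → ℕ) => ℂ) 2) (k : Fin d → ℕ),
        M a k = (∏ i, lam i ^ k i) * a k) ∧
      ‖M‖ ≤ 1 ∧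
      ∀ a : lp (fun _ : (Fin d → ℕ) => ℂ) 2,
        ∃ b Pa : lp (fun _ : (Fin d → ℕ) => ℂ) 2,
          (∀ k : Fin d → ℕ,
            (‖∏ i, lam i ^ m i‖ < ∏ i, ‖lam i‖ ^ k i → b k = 0) ∧
            (¬ ‖∏ i, lam i ^ m i‖ < ∏ i, ‖lam i‖ ^ k i →
              b k = a k)) ∧
          (∀ k : Fin d → ℕ,
            ((∏ i, lam i ^ k i) = ∏ i, lam i ^ m i → Pa k = a k) ∧
            ((∏ i, lam i ^ k i) ≠ ∏ i, lam i ^ m i → Pa k = 0)) ∧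
          Tendsto
            (fun n : ℕ => ((n : ℂ))⁻¹ •
              ∑ j ∈ Finset.Icc 1 n, ((∏ i, lam i ^ m i)⁻¹) ^ j • (M ^ j) b)
            atTop (nhds Pa) :=
  stmt17_general d lam hlam m
end
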